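/- arXiv:1611.06739 — 2 statements merged into one kernel-verified Lean document; each statement's English description precedes it below -/
import Mathlib

section
/- For all 0 ≤ i ≤ j ≤ m, if K_i ∈ 𝒰 then K_j ∈ 𝒰; that is, rejection by the Simes test of the worst-case set of size i implies rejection of the worst-case set of every larger size j. -/
open Finset

attribute [local instance] Classical.propDecidable

/-- The `i`-th smallest (1-indexed) element of the multiset of p-values `{p_j : j ∈ I}`. -/
noncomputable def pOrd {m : ℕ} (p : Fin m → ℝ) (I : Finset (Fin m)) (i : ℕ) : ℝ :=
  ((I.val.map p).sort (· ≤ ·)).getD (i - 1) 0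

/-- The Simes local test rejects `H_I` (written `I ∈ 𝒰`) iff `I` is nonempty and
`|I|·p_{(i:I)} ≤ i·α` for at least one `1 ≤ i ≤ |I|`. -/
def SimesU {m : ℕ} (α : ℝ) (p : Fin m → ℝ) (I : Finset (Fin m)) : Prop :=
  ∃ i, 1 ≤ i ∧ i ≤ I.card ∧ (I.card : ℝ) * pOrd p I i ≤ (i : ℝ) * α

/-- Closed testing rejects `H_I` (written `I ∈ 𝒳`) iff `J ∈ 𝒰` for every `J ⊇ I`. -/
def ClosedX {m : ℕ} (α : ℝ) (p : Fin m → ℝ) (I : Finset (Fin m)) : Prop :=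
  ∀ J, I ⊆ J → SimesU α p J

/-- `K_i = {r_{m−i+1},…,r_m}`: the `i` indices with largest p-values. -/
def Kset {m : ℕ} (r : Fin m → Fin m) (i : ℕ) : Finset (Fin m) :=
  (Finset.univ.filter fun j : Fin m => m - i ≤ (j : ℕ)).image r

/-- `L_i = {r_1,…,r_i}`: the `i` indices with smallest p-values. -/
def Lset {m : ℕ} (r : Fin m → Fin m) (i : ℕ) : Finset (Fin m) :=
  (Finset.univ.filter fun j : Fin m => (j : ℕ) < i).image r

/-- `h = max{0 ≤ i ≤ m : K_i ∉ 𝒰}`. -/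
noncomputable def hval {m : ℕ} (α : ℝ) (p : Fin m → ℝ) (r : Fin m → Fin m) : ℕ :=
  sSup {i | i ≤ m ∧ ¬ SimesU α p (Kset r i)}

/-- `t(S) = max{|I| : I ⊆ S, I ∉ 𝒳}`. -/
noncomputable def tval {m : ℕ} (α : ℝ) (p : Fin m → ℝ) (S : Finset (Fin m)) : ℕ :=
  sSup {k | ∃ I, I ⊆ S ∧ ¬ ClosedX α p I ∧ I.card = k}

/-- `d(S) = |S| − t(S)`. -/
noncomputable def dval {m : ℕ} (α : ℝ) (p : Fin m → ℝ) (S : Finset (Fin m)) : ℕ :=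
  S.card - tval α p S

/-- `q_α(S) = t(S)/|S|` for nonempty `S`, and `0` for `S = ∅`. -/
noncomputable def qval {m : ℕ} (α : ℝ) (p : Fin m → ℝ) (S : Finset (Fin m)) : ℝ :=
  if S = ∅ then 0 else (tval α p S : ℝ) / S.card

/-- `z = 0` if `h = m`, else `z = min{m−h ≤ i ≤ m : h·p_{(i)} ≤ (i−m+h+1)·α}`. -/
noncomputable def zval {m : ℕ} (α : ℝ) (p : Fin m → ℝ) (r : Fin m → Fin m) : ℕ :=
  if hval α p r = m then 0 else
    sInf {i | m - hval α p r ≤ i ∧ i ≤ m ∧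
      (hval α p r : ℝ) * pOrd p Finset.univ i ≤ ((i : ℝ) - m + hval α p r + 1) * α}

/-- `b_q = max{1 ≤ i ≤ m : m·p_{(i)} ≤ i·q}` (with `b_q = 0` if no such `i`). -/
noncomputable def bval {m : ℕ} (q : ℝ) (p : Fin m → ℝ) : ℕ :=
  sSup {i | 1 ≤ i ∧ i ≤ m ∧ (m : ℝ) * pOrd p Finset.univ i ≤ (i : ℝ) * q}

/-!
Sorted increasingly, the p-values of `K_i` are `p_{r_{m-i+1}} ≤ ⋯ ≤ p_{r_m}`, so the `k`-th
smallest p-value of `K_i` is the `(k + j - i)`-th smallest of `K_j`. A Simes rejection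
`i·p ≤ k·α` of `K_i` at rank `k` therefore gives `j·p ≤ (k + j - i)·α` for `K_j`, because
`(j/i)·k ≤ k + j - i` when `k ≤ i ≤ j`.
-/

lemma sort_map_univ_of_monotone {α : Type*} [LinearOrder α] {n : ℕ} {f : Fin n → α}
    (hf : Monotone f) : ((univ : Finset (Fin n)).val.map f).sort (· ≤ ·) = List.ofFn f := by
  rw [Fin.univ_val_map, Multiset.coe_sort]
  exact List.mergeSort_of_pairwise (by simpa using hf.sortedLE_ofFn.pairwise)

def Fin.topEmb {m i : ℕ} (hi : i ≤ m) : Fin i ↪ Fin m where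
  toFun t := ⟨m - i + t, by omega⟩
  inj' a b h := Fin.ext (by simpa using congrArg Fin.val h)

@[simp]
lemma Fin.val_topEmb {m i : ℕ} (hi : i ≤ m) (t : Fin i) : (Fin.topEmb hi t : ℕ) = m - i + t := rfl

lemma Fin.topEmb_monotone {m i : ℕ} (hi : i ≤ m) : Monotone (Fin.topEmb hi) :=
  fun a b h => by rw [Fin.le_def] at h ⊢; simp; omega

lemma filter_sub_le_eq_map_topEmb {m i : ℕ} (hi : i ≤ m) :
    (univ.filter fun j : Fin m => m - i ≤ (j : ℕ)) = univ.map (Fin.topEmb hi) := by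
  ext x
  simp only [mem_filter, mem_univ, true_and, mem_map]
  constructor
  · intro hx
    exact ⟨⟨x - (m - i), by omega⟩, Fin.ext (by simp; omega)⟩
  · rintro ⟨t, rfl⟩
    simp

lemma Kset_eq_map {m : ℕ} {r : Fin m → Fin m} (hr : Function.Injective r) {i : ℕ} (hi : i ≤ m) :
    Kset r i = univ.map ((Fin.topEmb hi).trans ⟨r, hr⟩) := by
  rw [Kset, filter_sub_le_eq_map_topEmb hi, map_eq_image, image_image, map_eq_image]
  rfl

lemma card_Kset {m : ℕ} {r : Fin m → Fin m} (hr : Function.Injective r) {i : ℕ} (hi : i ≤ m) :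
    #(Kset r i) = i := by
  simp [Kset_eq_map hr hi]

lemma pOrd_Kset {m : ℕ} {p : Fin m → ℝ} {r : Fin m → Fin m} (hr : Function.Injective r)
    (hmono : Monotone (p ∘ r)) {i k : ℕ} (hi : i ≤ m) (hk : 1 ≤ k) (hki : k ≤ i) :
    pOrd p (Kset r i) k = p (r ⟨m - i + (k - 1), by omega⟩) := by
  have hsort : ((Kset r i).val.map p).sort (· ≤ ·) = List.ofFn (p ∘ r ∘ Fin.topEmb hi) := by
    rw [Kset_eq_map hr hi, map_val, Multiset.map_map]
    exact sort_map_univ_of_monotone (hmono.comp (Fin.topEmb_monotone hi))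
  rw [pOrd, hsort, List.getD_eq_getElem _ _ (by simp; omega), List.getElem_ofFn]
  rfl

lemma pOrd_Kset_add_sub {m : ℕ} {p : Fin m → ℝ} {r : Fin m → Fin m} (hr : Function.Injective r)
    (hmono : Monotone (p ∘ r)) {i j k : ℕ} (hij : i ≤ j) (hjm : j ≤ m) (hk : 1 ≤ k)
    (hki : k ≤ i) : pOrd p (Kset r j) (k + (j - i)) = pOrd p (Kset r i) k := by
  rw [pOrd_Kset hr hmono hjm (by omega) (by omega), pOrd_Kset hr hmono (hij.trans hjm) hk hki]
  congr 3
  omega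

lemma mul_le_add_sub_mul_of_mul_le {i j k a x : ℝ} (hi : 0 < i) (hki : k ≤ i) (hij : i ≤ j)
    (ha : 0 ≤ a) (h : i * x ≤ k * a) : j * x ≤ (k + (j - i)) * a := by
  -- `i * (j x - (k + j - i) a) = j (i x - k a) + (j - i) (k - i) a`
  nlinarith [mul_le_mul_of_nonneg_left h (hi.le.trans hij),
    mul_nonneg (sub_nonneg.2 hij) (mul_nonneg (sub_nonneg.2 hki) ha)]

theorem stmt2_general
    (m : ℕ) (α : ℝ) (hα : 0 ≤ α ∧ α ≤ 1)
    (p : Fin m → ℝ)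
    (r : Fin m → Fin m) (hr : Function.Bijective r)
    (hmono : ∀ i j : Fin m, i ≤ j → p (r i) ≤ p (r j))
    (i j : ℕ) (hij : i ≤ j) (hjm : j ≤ m)
    (hKi : SimesU α p (Kset r i)) :
    SimesU α p (Kset r j) := by
  obtain ⟨k, hk, hki, hrej⟩ := hKi
  have him : i ≤ m := hij.trans hjm
  rw [card_Kset hr.1 him] at hki hrej
  refine ⟨k + (j - i), by omega, by rw [card_Kset hr.1 hjm]; omega, ?_⟩
  rw [card_Kset hr.1 hjm, pOrd_Kset_add_sub hr.1 (fun a b => hmono a b) hij hjm hk hki]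
  push_cast [Nat.cast_sub hij]
  exact mul_le_add_sub_mul_of_mul_le (by exact_mod_cast hk.trans hki) (by exact_mod_cast hki)
    (by exact_mod_cast hij) hα.1 hrej

theorem stmt2
    (m : ℕ) (hm : 1 ≤ m) (α : ℝ) (hα : 0 ≤ α ∧ α ≤ 1)
    (p : Fin m → ℝ) (hp : ∀ i, 0 ≤ p i ∧ p i ≤ 1)
    (r : Fin m → Fin m) (hr : Function.Bijective r)
    (hmono : ∀ i j : Fin m, i ≤ j → p (r i) ≤ p (r j))
    (i j : ℕ) (hij : i ≤ j) (hjm : j ≤ m)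
    (hKi : SimesU α p (Kset r i)) :
    SimesU α p (Kset r j) :=
  stmt2_general m α hα p r hr hmono i j hij hjm hKi
end

section
/- For every S ⊆ {1,…,m}: |S ∩ R| ≤ d(S) ≤ |S ∩ Z| ≤ |S ∩ B_α|, where R is the set of elementary hypotheses rejected by the closed testing procedure (Hommel's rejections), Z is the concentration set, and B_α is the Benjamini–Hochberg rejection set at level α. -/
open Finset

attribute [local instance] Classical.propDecidable

/-!
An index set `I ⊆ S` that closed testing does not reject avoids `R`, because closed-testing
rejections pass to supersets; hence `t(S) ≤ |S \ R|`. Conversely `S \ Z ⊆ K_{m-z} ⊆ K_h` and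
Simes does not reject `K_h`, so `t(S) ≥ |S \ Z|`. Both `m - z ≤ h` and `z ≤ b_α` come from the
Simes rejection of `K_{h+1}`: if it happens at its `i`-th smallest p-value, that value is `p_{(j)}`
with `j = m - h - 1 + i`, and this `j` lies both in the set defining `z` and in the one defining
`b_α`.
-/

section SortedIndices

variable {m : ℕ} (p : Fin m → ℝ) (r : Fin m → Fin m)

lemma sort_map_image_eq_ofFn {c : ℕ} {f : Fin c → Fin m} (hf : Function.Injective f)
    (hpf : Monotone (p ∘ f)) :
    ((univ.image f).val.map p).sort (· ≤ ·) = List.ofFn (p ∘ f) := by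
  have hval : (univ.image f).val.map p = (univ.val.map (p ∘ f) : Multiset ℝ) := by
    rw [image_val_of_injOn hf.injOn, Multiset.map_map]
  refine List.Perm.eq_of_pairwise' (Multiset.pairwise_sort _ _)
    (List.sortedLE_ofFn_iff.mpr hpf).pairwise ?_
  rw [← Multiset.coe_eq_coe, Multiset.sort_eq, hval, Fin.univ_def, List.ofFn_eq_map]
  rfl

lemma pOrd_image_of_monotone {c : ℕ} {f : Fin c → Fin m} (hf : Function.Injective f)
    (hpf : Monotone (p ∘ f)) {i : ℕ} (hi : 1 ≤ i) (hic : i ≤ c) :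
    pOrd p (univ.image f) i = p (f ⟨i - 1, by omega⟩) := by
  rw [pOrd, sort_map_image_eq_ofFn p hf hpf, List.getD_eq_getElem _ _ (by simp; omega),
    List.getElem_ofFn, Function.comp_apply]

def topIdx {c : ℕ} (hc : c ≤ m) (i : Fin c) : Fin m := ⟨m - c + i, by omega⟩

lemma topIdx_injective {c : ℕ} (hc : c ≤ m) : Function.Injective (topIdx hc) :=
  fun a b hab => Fin.ext (by simpa [topIdx] using congrArg Fin.val hab)

lemma kset_eq_image {c : ℕ} (hc : c ≤ m) : Kset r c = univ.image (r ∘ topIdx hc) := by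
  rw [Kset, ← image_image]
  congr 1
  ext j
  simp only [mem_filter, mem_univ, true_and, mem_image, topIdx]
  exact ⟨fun h => ⟨⟨j - (m - c), by omega⟩, Fin.ext (by simp; omega)⟩,
    fun ⟨i, hi⟩ => hi ▸ Nat.le_add_right _ _⟩

variable {r}

lemma card_kset (hr : Function.Injective r) {c : ℕ} (hc : c ≤ m) : (Kset r c).card = c := by
  rw [kset_eq_image r hc, card_image_of_injective _ (hr.comp (topIdx_injective hc)),
    card_univ, Fintype.card_fin]

lemma kset_zero : Kset r 0 = ∅ := by
  rw [Kset, filter_false_of_mem (fun j _ => by omega), image_empty]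

lemma kset_self (hr : Function.Surjective r) : Kset r m = univ := by
  rw [Kset, filter_true_of_mem (fun j _ => by omega)]
  exact image_univ_of_surjective hr

lemma kset_mono {i j : ℕ} (hij : i ≤ j) : Kset r i ⊆ Kset r j :=
  image_subset_image fun x hx => by simp only [mem_filter, mem_univ, true_and] at *; omega

lemma lset_mono {i j : ℕ} (hij : i ≤ j) : Lset r i ⊆ Lset r j :=
  image_subset_image fun x hx => by simp only [mem_filter, mem_univ, true_and] at *; omega

lemma sdiff_lset_subset_kset (hr : Function.Surjective r) (S : Finset (Fin m)) (z : ℕ) :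
    S \ Lset r z ⊆ Kset r (m - z) := by
  intro a ha
  obtain ⟨i, rfl⟩ := hr a
  have hi : ¬ (i : ℕ) < z := fun h => (mem_sdiff.mp ha).2 (mem_image_of_mem r (by simpa))
  exact mem_image_of_mem r (by simp only [mem_filter, mem_univ, true_and]; omega)

lemma pOrd_kset (hr : Function.Injective r) (hmono : Monotone (p ∘ r)) {c i : ℕ}
    (hc : c ≤ m) (hi : 1 ≤ i) (hic : i ≤ c) :
    pOrd p (Kset r c) i = p (r ⟨m - c + (i - 1), by omega⟩) := by
  rw [kset_eq_image r hc, pOrd_image_of_monotone p (hr.comp (topIdx_injective hc))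
    (hmono.comp fun a b hab => by simpa [topIdx] using hab) hi hic]
  rfl

lemma pOrd_kset_eq_pOrd_univ (hr : Function.Bijective r) (hmono : Monotone (p ∘ r))
    {c i : ℕ} (hc : c ≤ m) (hi : 1 ≤ i) (hic : i ≤ c) :
    pOrd p (Kset r c) i = pOrd p univ (m - c + i) := by
  rw [← kset_self hr.2, pOrd_kset p hr.1 hmono hc hi hic,
    pOrd_kset p hr.1 hmono le_rfl (by omega) (by omega)]
  congr 3
  omega

end SortedIndices

section ClosedTesting

variable {m : ℕ} {α : ℝ} {p : Fin m → ℝ}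

lemma ClosedX.mono {I I' : Finset (Fin m)} (hI : ClosedX α p I) (h : I ⊆ I') :
    ClosedX α p I' :=
  fun J hJ => hI J (h.trans hJ)

lemma not_simesU_empty : ¬ SimesU α p ∅ := by
  rintro ⟨i, hi, hi', -⟩
  simp at hi'
  omega

lemma le_tval {S I : Finset (Fin m)} (hIS : I ⊆ S) (hI : ¬ ClosedX α p I) :
    I.card ≤ tval α p S :=
  le_csSup ⟨S.card, fun _ ⟨_, hJS, _, hk⟩ => hk ▸ card_le_card hJS⟩ ⟨I, hIS, hI, rfl⟩

lemma tval_le {S : Finset (Fin m)} {k : ℕ} (h : ∀ I ⊆ S, ¬ ClosedX α p I → I.card ≤ k) :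
    tval α p S ≤ k := by
  refine csSup_le' ?_
  rintro _ ⟨I, hIS, hI, rfl⟩
  exact h I hIS hI

lemma card_inter_closedX_singleton_le_dval (S : Finset (Fin m)) :
    (S ∩ univ.filter fun i => ClosedX α p {i}).card ≤ dval α p S := by
  set R := univ.filter fun i => ClosedX α p {i}
  have ht : tval α p S ≤ (S \ R).card := tval_le fun I hIS hI =>
    card_le_card fun x hx => mem_sdiff.mpr
      ⟨hIS hx, fun hxR => hI ((mem_filter.mp hxR).2.mono (singleton_subset_iff.mpr hx))⟩
  have := card_inter_add_card_sdiff S R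
  rw [dval]
  omega

lemma dval_le_card_inter {S T : Finset (Fin m)} (hST : ¬ ClosedX α p (S \ T)) :
    dval α p S ≤ (S ∩ T).card := by
  have ht := le_tval sdiff_subset hST
  have := card_inter_add_card_sdiff S T
  rw [dval]
  omega

end ClosedTesting

lemma mul_le_mul_of_mul_le_sub_add_mul {m c j x α : ℝ} (h : c * x ≤ (j - m + c) * α)
    (hα : 0 ≤ α) (hc : 0 < c) (hcm : c ≤ m) (hjm : j ≤ m) : m * x ≤ j * α := by
  have : c * (m * x) ≤ c * (j * α) := by
    nlinarith [mul_nonneg (sub_nonneg.2 hcm) (sub_nonneg.2 hjm)]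
  exact le_of_mul_le_mul_left this hc

section Hommel

variable {m : ℕ} {α : ℝ} {p : Fin m → ℝ} {r : Fin m → Fin m}

variable (α p r) in
lemma hval_le_and_not_simesU_kset : hval α p r ≤ m ∧ ¬ SimesU α p (Kset r (hval α p r)) :=
  Nat.sSup_mem (s := {i | i ≤ m ∧ ¬ SimesU α p (Kset r i)})
    ⟨0, Nat.zero_le m, kset_zero ▸ not_simesU_empty⟩ ⟨m, fun _ hx => hx.1⟩

lemma simesU_kset_hval_succ (hlt : hval α p r < m) :
    SimesU α p (Kset r (hval α p r + 1)) := by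
  by_contra hc
  have : hval α p r + 1 ≤ hval α p r := le_csSup ⟨m, fun _ hx => hx.1⟩ ⟨hlt, hc⟩
  omega

lemma exists_of_simesU_kset (hr : Function.Bijective r) (hmono : Monotone (p ∘ r))
    {c : ℕ} (hc : c ≤ m) (hU : SimesU α p (Kset r c)) :
    ∃ j, m - c < j ∧ j ≤ m ∧
      (c : ℝ) * pOrd p univ j ≤ ((j : ℝ) - m + c) * α := by
  obtain ⟨i, hi, hic, hle⟩ := hU
  rw [card_kset hr.1 hc] at hic hle
  refine ⟨m - c + i, by omega, by omega, ?_⟩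
  rw [← pOrd_kset_eq_pOrd_univ p hr hmono hc hi hic]
  convert hle using 2
  push_cast [Nat.cast_sub hc]
  ring

lemma sub_zval_le_hval_and_zval_le_bval (hα : 0 ≤ α) (hr : Function.Bijective r)
    (hmono : Monotone (p ∘ r)) :
    m - zval α p r ≤ hval α p r ∧ zval α p r ≤ bval α p := by
  rw [zval]
  split_ifs with hm
  · exact ⟨by omega, Nat.zero_le _⟩
  set h := hval α p r
  have hlt : h < m := lt_of_le_of_ne (hval_le_and_not_simesU_kset α p r).1 hm
  obtain ⟨j, hjc, hjm, hle⟩ :=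
    exists_of_simesU_kset hr hmono hlt (simesU_kset_hval_succ hlt)
  push_cast at hle
  have hjz : j ∈ {i | m - h ≤ i ∧ i ≤ m ∧
      (h : ℝ) * pOrd p univ i ≤ ((i : ℝ) - m + h + 1) * α} := by
    refine ⟨by omega, hjm, ?_⟩
    have hpos : (0 : ℝ) < j - m + h + 1 := by
      have : m < j + (h + 1) := by omega
      have : (m : ℝ) < j + (h + 1) := by exact_mod_cast this
      linarith
    rcases le_or_gt 0 (pOrd p univ j) with hx | hx <;> nlinarith
  have hjb : j ∈ {i | 1 ≤ i ∧ i ≤ m ∧ (m : ℝ) * pOrd p univ i ≤ (i : ℝ) * α} :=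
    ⟨by omega, hjm, mul_le_mul_of_mul_le_sub_add_mul hle hα (by positivity)
      (by exact_mod_cast hlt) (by exact_mod_cast hjm)⟩
  have hz := (Nat.sInf_mem ⟨j, hjz⟩).1
  exact ⟨by omega, (Nat.sInf_le hjz).trans (le_csSup ⟨m, fun _ hx => hx.2.1⟩ hjb)⟩

end Hommel

theorem stmt11_general
    (m : ℕ) (α : ℝ) (hα : 0 ≤ α ∧ α ≤ 1)
    (p : Fin m → ℝ)
    (r : Fin m → Fin m) (hr : Function.Bijective r)
    (hmono : ∀ i j : Fin m, i ≤ j → p (r i) ≤ p (r j))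
    (S : Finset (Fin m)) :
    (S ∩ Finset.univ.filter fun i => ClosedX α p {i}).card ≤ dval α p S ∧
    dval α p S ≤ (S ∩ Lset r (zval α p r)).card ∧
    (S ∩ Lset r (zval α p r)).card ≤ (S ∩ Lset r (bval α p)).card := by
  obtain ⟨hzh, hzb⟩ := sub_zval_le_hval_and_zval_le_bval hα.1 hr hmono
  have hSZ : ¬ ClosedX α p (S \ Lset r (zval α p r)) := fun hX =>
    (hval_le_and_not_simesU_kset α p r).2
      (hX _ ((sdiff_lset_subset_kset hr.2 S _).trans (kset_mono hzh)))
  exact ⟨card_inter_closedX_singleton_le_dval S, dval_le_card_inter hSZ,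
    card_le_card (inter_subset_inter_left (lset_mono hzb))⟩

theorem stmt11
    (m : ℕ) (hm : 1 ≤ m) (α : ℝ) (hα : 0 ≤ α ∧ α ≤ 1)
    (p : Fin m → ℝ) (hp : ∀ i, 0 ≤ p i ∧ p i ≤ 1)
    (r : Fin m → Fin m) (hr : Function.Bijective r)
    (hmono : ∀ i j : Fin m, i ≤ j → p (r i) ≤ p (r j))
    (S : Finset (Fin m)) :
    (S ∩ Finset.univ.filter fun i => ClosedX α p {i}).card ≤ dval α p S ∧
    dval α p S ≤ (S ∩ Lset r (zval α p r)).card ∧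
    (S ∩ Lset r (zval α p r)).card ≤ (S ∩ Lset r (bval α p)).card :=
  stmt11_general m α hα p r hr hmono S
end
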